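/- arXiv:1509.00646 — 2 statements merged into one kernel-verified Lean document; each statement's English description precedes it below -/
import Mathlib

section
/- Let λ1 ∈ ℕ and λ2 ∈ ℂ (with λ1 cast to ℂ in the operators). Then the vector v = ξ1^{λ1+1} ∈ R is a singular vector of weight (−λ1−2, λ1+λ2+1): it satisfies E1 v = 0, E2 v = 0, E12 v = 0, H1 v = (−λ1−2)·v and H2 v = (λ1+λ2+1)·v. -/
open MvPolynomial

noncomputable section

/-- The polynomial algebra `R = ℂ[ξ1,ξ2,ξ3]` (variables indexed `0, 1, 2`). -/
abbrev R3 : Type := MvPolynomial (Fin 3) ℂ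

/-- Multiplication by the variable `ξᵢ` as a `ℂ`-linear endomorphism of `R`. -/
def ξ (i : Fin 3) : Module.End ℂ R3 := LinearMap.mulLeft ℂ (X i)

/-- The partial derivative `∂ᵢ` with respect to `ξᵢ` as a `ℂ`-linear endomorphism of `R`. -/
def D (i : Fin 3) : Module.End ℂ R3 := (pderiv i).toLinearMap

/-- `E1 = −ξ2∂3 + (ξ1∂1 + (1/2)ξ3∂3 − λ1)∂1 − (1/2)(ξ2 + (1/2)ξ3∂1)∂1∂2`. -/
def E1 (lam1 : ℂ) : Module.End ℂ R3 :=
  -(ξ 1 * D 2) + (ξ 0 * D 0 + (1/2 : ℂ) • (ξ 2 * D 2) - lam1 • 1) * D 0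
    - (1/2 : ℂ) • ((ξ 1 + (1/2 : ℂ) • (ξ 2 * D 0)) * (D 0 * D 1))

/-- `E2 = ξ1∂3 + (ξ2∂2 + (1/2)ξ3∂3 − λ2)∂2 − (1/2)(ξ1 − (1/2)ξ3∂2)∂1∂2`. -/
def E2 (lam2 : ℂ) : Module.End ℂ R3 :=
  ξ 0 * D 2 + (ξ 1 * D 1 + (1/2 : ℂ) • (ξ 2 * D 2) - lam2 • 1) * D 1
    - (1/2 : ℂ) • ((ξ 0 - (1/2 : ℂ) • (ξ 2 * D 1)) * (D 0 * D 1))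

/-- `E12 = (ξ1∂1 + ξ2∂2 + ξ3∂3 − λ1 − λ2)∂3
      − (1/2)(ξ1∂1 − ξ2∂2 − λ1 + λ2 − (1/2)ξ3∂1∂2)∂1∂2`. -/
def E12 (lam1 lam2 : ℂ) : Module.End ℂ R3 :=
  (ξ 0 * D 0 + ξ 1 * D 1 + ξ 2 * D 2 - (lam1 + lam2) • 1) * D 2
    - (1/2 : ℂ) • ((ξ 0 * D 0 - ξ 1 * D 1 - (lam1 - lam2) • 1
        - (1/2 : ℂ) • (ξ 2 * (D 0 * D 1))) * (D 0 * D 1))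

/-- `H1 = −2ξ1∂1 + ξ2∂2 − ξ3∂3 + λ1`. -/
def H1 (lam1 : ℂ) : Module.End ℂ R3 :=
  (-2 : ℂ) • (ξ 0 * D 0) + ξ 1 * D 1 - ξ 2 * D 2 + lam1 • 1

/-- `H2 = ξ1∂1 − 2ξ2∂2 − ξ3∂3 + λ2`. -/
def H2 (lam2 : ℂ) : Module.End ℂ R3 :=
  ξ 0 * D 0 + (-2 : ℂ) • (ξ 1 * D 1) - ξ 2 * D 2 + lam2 • 1

lemma hD1 (n : ℕ) : D 1 (X 0 ^ n : R3) = 0 := by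
  simp [D, Derivation.leibniz_pow, pderiv_X]

lemma hD2 (n : ℕ) : D 2 (X 0 ^ n : R3) = 0 := by
  simp [D, Derivation.leibniz_pow, pderiv_X]

lemma hD0 (n : ℕ) : D 0 (X 0 ^ (n+1) : R3) = ((n:ℂ)+1) • X 0 ^ n := by
  simp [D, Derivation.leibniz_pow, pderiv_X]
  rw [add_smul, one_smul, smul_eq_C_mul, map_natCast]; ring

lemma hξD (n : ℕ) : ξ 0 (D 0 (X 0 ^ n : R3)) = (n:ℂ) • X 0 ^ n := by
  cases n with
  | zero => simp [D, ξ]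
  | succ m => simp [hD0, ξ, LinearMap.mulLeft_apply, smul_comm, ← pow_succ']

lemma hξ (n : ℕ) : ξ 0 (X 0 ^ n : R3) = X 0 ^ (n+1) := by
  simp [ξ, ← pow_succ']

/-- For `λ1 ∈ ℕ`, the vector `v = ξ1^{λ1+1}` is a singular vector of the Verma module
`M(λ)` of `sl(3,ℂ)` of weight `(−λ1−2, λ1+λ2+1)`. -/
theorem singular_vector_s1 (lam1 : ℕ) (lam2 : ℂ) :
    E1 (lam1 : ℂ) (X 0 ^ (lam1 + 1)) = 0 ∧
    E2 lam2 (X 0 ^ (lam1 + 1)) = 0 ∧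
    E12 (lam1 : ℂ) lam2 (X 0 ^ (lam1 + 1)) = 0 ∧
    H1 (lam1 : ℂ) (X 0 ^ (lam1 + 1)) = (-(lam1 : ℂ) - 2) • X 0 ^ (lam1 + 1) ∧
    H2 lam2 (X 0 ^ (lam1 + 1)) = ((lam1 : ℂ) + lam2 + 1) • X 0 ^ (lam1 + 1) := by
  refine ⟨?_, ?_, ?_, ?_, ?_⟩ <;>
  · simp only [E1, E2, E12, H1, H2, LinearMap.add_apply, LinearMap.sub_apply,
      LinearMap.neg_apply, LinearMap.smul_apply, Module.End.mul_apply,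
      Module.End.one_apply, hD1, hD2, hD0, map_zero, map_smul, smul_zero,
      hξD, hξ]
    try module
end
end

section
/- Let λ2 ∈ ℕ and λ1 ∈ ℂ (with λ2 cast to ℂ in the operators). Then the vector v = ξ2^{λ2+1} ∈ R is a singular vector of weight (λ1+λ2+1, −λ2−2): it satisfies E1 v = 0, E2 v = 0, E12 v = 0, H1 v = (λ1+λ2+1)·v and H2 v = (−λ2−2)·v. -/
open MvPolynomial

noncomputable section

lemma Dpow0 (n : ℕ) : pderiv (0:Fin 3) ((X 1 ^ n : R3)) = 0 := by
  simp [Derivation.leibniz_pow, pderiv_X]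
lemma Dpow2 (n : ℕ) : pderiv (2:Fin 3) ((X 1 ^ n : R3)) = 0 := by
  simp [Derivation.leibniz_pow, pderiv_X]
lemma Dpow1 (n : ℕ) : pderiv (1:Fin 3) ((X 1 ^ n : R3)) = n • X 1 ^ (n-1) := by
  simp [Derivation.leibniz_pow, pderiv_X]

/-- For `λ2 ∈ ℕ`, the vector `v = ξ2^{λ2+1}` is a singular vector of the Verma module
`M(λ)` of `sl(3,ℂ)` of weight `(λ1+λ2+1, −λ2−2)`. -/
theorem singular_vector_s2 (lam1 : ℂ) (lam2 : ℕ) :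
    E1 lam1 (X 1 ^ (lam2 + 1)) = 0 ∧
    E2 (lam2 : ℂ) (X 1 ^ (lam2 + 1)) = 0 ∧
    E12 lam1 (lam2 : ℂ) (X 1 ^ (lam2 + 1)) = 0 ∧
    H1 lam1 (X 1 ^ (lam2 + 1)) = (lam1 + (lam2 : ℂ) + 1) • X 1 ^ (lam2 + 1) ∧
    H2 (lam2 : ℂ) (X 1 ^ (lam2 + 1)) = (-(lam2 : ℂ) - 2) • X 1 ^ (lam2 + 1) := by
  refine ⟨?_, ?_, ?_, ?_, ?_⟩
  · simp [E1, ξ, D, Module.End.mul_apply, LinearMap.mulLeft_apply, Dpow0, Dpow1, Dpow2]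
  · simp [E2, ξ, D, Module.End.mul_apply, LinearMap.mulLeft_apply, Dpow0, Dpow1, Dpow2]
    cases lam2 with
    | zero => simp
    | succ k =>
      simp [pow_succ, smul_eq_C_mul, map_ofNat]
      ring
  · simp [E12, ξ, D, Module.End.mul_apply, LinearMap.mulLeft_apply, Dpow0, Dpow1, Dpow2]
  · simp [H1, ξ, D, Module.End.mul_apply, LinearMap.mulLeft_apply, Dpow0, Dpow1, Dpow2]
    cases lam2 with
    | zero => simp [smul_eq_C_mul, map_ofNat]; try ring
    | succ k =>
      simp [pow_succ, smul_eq_C_mul, map_ofNat]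
      ring
  · simp [H2, ξ, D, Module.End.mul_apply, LinearMap.mulLeft_apply, Dpow0, Dpow1, Dpow2]
    cases lam2 with
    | zero => simp [smul_eq_C_mul, map_ofNat]; try ring
    | succ k =>
      simp [pow_succ, smul_eq_C_mul, map_ofNat]
      ring
end
end
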